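/- arXiv:1802.06992 — 3 statements merged into one kernel-verified Lean document; each statement's English description precedes it below -/
import Mathlib

section
/- (Decoupling lower bound) Let Y ∈ {0,1}^n be fixed, let c_j ∈ [0,2], p*_j ∈ [0,1], w*_{ij} ≥ 0 be constants, and let δ_1,…,δ_n be independent uniform {0,1} random variables. Define f_δ = Σ_i δ_i Y_i |Σ_{j ∈ Γ(i)} (1-δ_j) w*_{ij} c_j (Y_j - p*_j)| and f = Σ_i Y_i |Σ_{j ∈ Γ(i)} w*_{ij} c_j (Y_j - p*_j)|. If no vertex i is in its own neighborhood Γ(i), then E_δ[f_δ] ≥ f/4. -/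
open Finset

lemma decoupling_count {V : Type*} [Fintype V] [DecidableEq V] {i j : V} (hij : i ≠ j) :
    ∑ δ : V → Bool, (if δ i then (1:ℝ) else 0) * (1 - if δ j then (1:ℝ) else 0)
      = 2 ^ Fintype.card V / 4 := by
  set g : V → Bool → ℝ := fun k b =>
    if k = i then (if b then 1 else 0) else if k = j then (if b then 0 else 1) else 1 with hg
  have hterm : ∀ δ : V → Bool,
      (if δ i then (1:ℝ) else 0) * (1 - if δ j then (1:ℝ) else 0) = ∏ k, g k (δ k) := by
    intro δ
    have hsplit : ({i, j} : Finset V) ⊆ univ := subset_univ _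
    rw [← Finset.prod_sdiff hsplit]
    have h1 : ∏ k ∈ univ \ {i, j}, g k (δ k) = 1 := by
      apply Finset.prod_eq_one
      intro k hk
      simp only [mem_sdiff, mem_insert, mem_singleton, not_or] at hk
      simp [hg, hk.2.1, hk.2.2]
    have h2 : ∏ k ∈ ({i, j} : Finset V), g k (δ k)
        = (if δ i then (1:ℝ) else 0) * (if δ j then (0:ℝ) else 1) := by
      rw [Finset.prod_pair hij]
      simp [hg, hij, hij.symm]
    rw [h1, h2, one_mul]
    by_cases hdi : δ i <;> by_cases hdj : δ j <;> simp [hdi, hdj]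
  rw [Finset.sum_congr rfl fun δ _ => hterm δ, ← Fintype.prod_sum g]
  have hgs : ∀ k, (∑ b : Bool, g k b) = if k = i ∨ k = j then 1 else 2 := by
    intro k
    by_cases hki : k = i <;> by_cases hkj : k = j <;> simp [hg, hki, hkj]
  rw [Finset.prod_congr rfl fun k _ => hgs k]
  have hsub : ({i, j} : Finset V) ⊆ univ := subset_univ _
  rw [← Finset.prod_sdiff hsub]
  have h1 : ∏ k ∈ univ \ {i, j}, (if k = i ∨ k = j then (1:ℝ) else 2)
      = 2 ^ (Fintype.card V - 2) := by
    rw [Finset.prod_congr rfl (g := fun _ => (2:ℝ)) (fun k hk => by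
      simp only [mem_sdiff, mem_insert, mem_singleton, not_or] at hk
      simp [hk.2.1, hk.2.2])]
    rw [Finset.prod_const, Finset.card_sdiff_of_subset hsub, card_univ,
      Finset.card_pair hij]
  have h2 : ∏ k ∈ ({i, j} : Finset V), (if k = i ∨ k = j then (1:ℝ) else 2) = 1 := by
    apply Finset.prod_eq_one
    intro k hk
    simp only [mem_insert, mem_singleton] at hk
    simp [hk]
  rw [h1, h2, mul_one]
  have hn : 2 ≤ Fintype.card V := by
    have : ({i, j} : Finset V).card ≤ Fintype.card V := by
      simpa [card_univ] using Finset.card_le_card (subset_univ ({i, j} : Finset V))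
    rwa [Finset.card_pair hij] at this
  have : (2:ℝ) ^ Fintype.card V = 2 ^ (Fintype.card V - 2) * 4 := by
    rw [show (4:ℝ) = 2 ^ 2 by norm_num, ← pow_add]
    congr 1
    omega
  rw [this]
  ring

/-- Decoupling lower bound: with δ_i i.i.d. uniform {0,1},
E_δ[Σ_i δ_i Y_i |Σ_{j ∈ Γ(i)} (1-δ_j) w*_{ij} c_j (Y_j - p*_j)|]
  ≥ (1/4) Σ_i Y_i |Σ_{j ∈ Γ(i)} w*_{ij} c_j (Y_j - p*_j)|,
provided i ∉ Γ(i) for all i. -/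
theorem decoupling_lower_bound {V : Type*} [Fintype V] [DecidableEq V]
    (Γ : V → Finset V) (hΓ : ∀ i, i ∉ Γ i)
    (Y c pstar : V → ℝ) (w : V → V → ℝ)
    (hY : ∀ i, Y i = 0 ∨ Y i = 1)
    (hc : ∀ j, 0 ≤ c j ∧ c j ≤ 2)
    (hp : ∀ j, 0 ≤ pstar j ∧ pstar j ≤ 1)
    (hw : ∀ i j, 0 ≤ w i j) :
    (1 / 4) * ∑ i, Y i * |∑ j ∈ Γ i, w i j * c j * (Y j - pstar j)|
      ≤ ((1 : ℝ) / 2 ^ Fintype.card V) * ∑ δ : V → Bool,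
          ∑ i, (if δ i then (1 : ℝ) else 0) * Y i *
            |∑ j ∈ Γ i, (1 - if δ j then (1 : ℝ) else 0) * w i j * c j * (Y j - pstar j)| := by
  set a : V → V → ℝ := fun i j => w i j * c j * (Y j - pstar j) with ha
  have hYnn : ∀ i, 0 ≤ Y i := fun i => by rcases hY i with h | h <;> rw [h] <;> norm_num
  -- per-vertex bound
  have key : ∀ i : V,
      2 ^ Fintype.card V / 4 * |∑ j ∈ Γ i, a i j|
        ≤ ∑ δ : V → Bool, (if δ i then (1:ℝ) else 0) *
            |∑ j ∈ Γ i, (1 - if δ j then (1:ℝ) else 0) * a i j| := by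
    intro i
    have h1 : ∑ δ : V → Bool, (if δ i then (1:ℝ) else 0) *
        (∑ j ∈ Γ i, (1 - if δ j then (1:ℝ) else 0) * a i j)
        = 2 ^ Fintype.card V / 4 * ∑ j ∈ Γ i, a i j := by
      have hswap : ∑ δ : V → Bool, (if δ i then (1:ℝ) else 0) *
          (∑ j ∈ Γ i, (1 - if δ j then (1:ℝ) else 0) * a i j)
          = ∑ j ∈ Γ i, ∑ δ : V → Bool,
              (if δ i then (1:ℝ) else 0) * ((1 - if δ j then (1:ℝ) else 0) * a i j) := by
        simp_rw [Finset.mul_sum]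
        exact Finset.sum_comm
      rw [hswap, Finset.mul_sum]
      apply Finset.sum_congr rfl
      intro j hj
      have hij : i ≠ j := fun h => hΓ i (h ▸ hj)
      have : ∑ δ : V → Bool, (if δ i then (1:ℝ) else 0) * ((1 - if δ j then (1:ℝ) else 0) * a i j)
          = (∑ δ : V → Bool, (if δ i then (1:ℝ) else 0) * (1 - if δ j then (1:ℝ) else 0)) * a i j := by
        rw [Finset.sum_mul]; apply Finset.sum_congr rfl; intro δ _; ring
      rw [this, decoupling_count hij]
    calc 2 ^ Fintype.card V / 4 * |∑ j ∈ Γ i, a i j|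
        = |∑ δ : V → Bool, (if δ i then (1:ℝ) else 0) *
            (∑ j ∈ Γ i, (1 - if δ j then (1:ℝ) else 0) * a i j)| := by
          rw [h1, abs_mul]
          congr 1
          rw [abs_of_nonneg]
          positivity
      _ ≤ ∑ δ : V → Bool, |(if δ i then (1:ℝ) else 0) *
            (∑ j ∈ Γ i, (1 - if δ j then (1:ℝ) else 0) * a i j)| := Finset.abs_sum_le_sum_abs _ _
      _ = ∑ δ : V → Bool, (if δ i then (1:ℝ) else 0) *
            |∑ j ∈ Γ i, (1 - if δ j then (1:ℝ) else 0) * a i j| := by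
          apply Finset.sum_congr rfl
          intro δ _
          rw [abs_mul]
          congr 1
          by_cases h : δ i <;> simp [h]
  -- assemble
  rw [Finset.sum_comm]
  conv_rhs => rw [one_div_mul_eq_div]
  rw [le_div_iff₀ (by positivity : (0:ℝ) < 2 ^ Fintype.card V)]
  calc (1/4) * (∑ i, Y i * |∑ j ∈ Γ i, a i j|) * 2 ^ Fintype.card V
      = ∑ i, Y i * (2 ^ Fintype.card V / 4 * |∑ j ∈ Γ i, a i j|) := by
        rw [Finset.mul_sum, Finset.sum_mul]
        apply Finset.sum_congr rfl; intro i _; ring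
    _ ≤ ∑ i, Y i * ∑ δ : V → Bool, (if δ i then (1:ℝ) else 0) *
          |∑ j ∈ Γ i, (1 - if δ j then (1:ℝ) else 0) * a i j| :=
        Finset.sum_le_sum fun i _ => mul_le_mul_of_nonneg_left (key i) (hYnn i)
    _ = ∑ i, ∑ δ : V → Bool, (if δ i then (1:ℝ) else 0) * Y i *
          |∑ j ∈ Γ i, (1 - if δ j then (1:ℝ) else 0) * w i j * c j * (Y j - pstar j)| := by
        apply Finset.sum_congr rfl
        intro i _
        rw [Finset.mul_sum]
        apply Finset.sum_congr rfl
        intro δ _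
        have hs : ∑ j ∈ Γ i, (1 - if δ j then (1:ℝ) else 0) * w i j * c j * (Y j - pstar j)
            = ∑ j ∈ Γ i, (1 - if δ j then (1:ℝ) else 0) * a i j := by
          apply Finset.sum_congr rfl; intro j _; simp only [ha]; ring
        rw [hs]; ring
end

section
/- (Random merging of clusters) Let a clustering C = (A_1,…,A_m) of a finite vertex set have MAX-AGREE objective value OPT = C⁻ + Σ_{ij} η_{ij} χ_{ij}, where χ_{ij} = 1 iff i,j are in the same cluster, η_{ij} = c⁺_{ij} - c⁻_{ij}, and C⁻ = Σ_{ij} c⁻_{ij} with c⁺, c⁻ ≥ 0. Color each cluster independently and uniformly with one of t colors and merge clusters of equal color. Then the expected objective of the merged clustering is C⁻ + Σ_{ij} η_{ij} χ_{ij} + (1/t) Σ_{ij} η_{ij}(1 - χ_{ij}), and this is at least (1 - 1/t)·OPT. -/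
/-!
Two distinct clusters receive the same colour with probability `1/t`, so by linearity of
expectation the merged clustering scores `C⁻ + S + S'/t` on average, where `S = Σ η χ` and
`S' = Σ η (1 - χ)`. This exceeds `(1 - 1/t)(C⁻ + S)` by `(C⁻ + S + S')/t = C⁺/t ≥ 0`.
-/

open Finset

section Colorings

variable {ι α : Type*} [Fintype ι] [DecidableEq ι] [Fintype α] [DecidableEq α]

theorem sum_ite_apply_eq_apply_of_ne {a b : ι} (hab : a ≠ b) :
    ∑ f : ι → α, (if f a = f b then (1 : ℝ) else 0) = Fintype.card α ^ (Fintype.card ι - 1) := by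
  rw [← Fintype.sum_equiv (Equiv.piSplitAt b fun _ => α).symm _ _ (fun _ => rfl),
    Fintype.sum_prod_type, Finset.sum_comm]
  simp [Equiv.piSplitAt, hab, Fintype.card_subtype_compl]

theorem average_ite_apply_eq_apply [Nonempty α] (a b : ι) :
    1 / (Fintype.card α : ℝ) ^ Fintype.card ι * ∑ f : ι → α, (if f a = f b then (1 : ℝ) else 0)
      = if a = b then 1 else 1 / (Fintype.card α : ℝ) := by
  have hα : (Fintype.card α : ℝ) ≠ 0 := by positivity
  split_ifs with hab
  · simp [hab]
  · have hι : Fintype.card ι - 1 + 1 = Fintype.card ι :=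
      Nat.sub_add_cancel (Fintype.card_pos_iff.mpr ⟨a⟩)
    rw [sum_ite_apply_eq_apply_of_ne hab, ← hι, pow_succ, Nat.add_sub_cancel]
    field_simp

theorem average_merged_score [Nonempty α] {V : Type*} (E : Finset (V × V)) (c : ℝ)
    (w : V → V → ℝ) (cl : V → ι) :
    1 / (Fintype.card α : ℝ) ^ Fintype.card ι * ∑ f : ι → α,
        (c + ∑ e ∈ E, w e.1 e.2 * (if f (cl e.1) = f (cl e.2) then (1 : ℝ) else 0))
      = c + ∑ e ∈ E, w e.1 e.2 * (if cl e.1 = cl e.2 then (1 : ℝ) else 0)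
          + 1 / Fintype.card α *
              ∑ e ∈ E, w e.1 e.2 * (1 - if cl e.1 = cl e.2 then (1 : ℝ) else 0) := by
  have hα : (Fintype.card α : ℝ) ^ Fintype.card ι ≠ 0 := by positivity
  rw [sum_add_distrib, sum_comm, mul_add, sum_const, card_univ, Fintype.card_fun, nsmul_eq_mul,
    mul_sum, mul_sum, add_assoc, ← sum_add_distrib]
  push_cast
  congr 1
  · field_simp
  refine sum_congr rfl fun e _ => ?_
  rw [← mul_sum, mul_left_comm, average_ite_apply_eq_apply]
  split_ifs <;> ring

end Colorings

theorem random_cluster_merging_general {V : Type*}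
    (E : Finset (V × V)) (m t : ℕ) (ht : 0 < t)
    (cp cm : V → V → ℝ)
    (hcp : ∀ i j, 0 ≤ cp i j)
    (η : V → V → ℝ) (hη : ∀ i j, η i j = cp i j - cm i j)
    (cl : V → Fin m) :
    ((1 : ℝ) / (t : ℝ) ^ m) * ∑ col : Fin m → Fin t,
        ((∑ e ∈ E, cm e.1 e.2) +
          ∑ e ∈ E, η e.1 e.2 * (if col (cl e.1) = col (cl e.2) then (1 : ℝ) else 0))
      = (∑ e ∈ E, cm e.1 e.2)
          + (∑ e ∈ E, η e.1 e.2 * (if cl e.1 = cl e.2 then (1 : ℝ) else 0))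
          + (1 / (t : ℝ)) *
              ∑ e ∈ E, η e.1 e.2 * (1 - if cl e.1 = cl e.2 then (1 : ℝ) else 0)
    ∧
    (1 - 1 / (t : ℝ)) *
        ((∑ e ∈ E, cm e.1 e.2)
          + ∑ e ∈ E, η e.1 e.2 * (if cl e.1 = cl e.2 then (1 : ℝ) else 0))
      ≤ ((1 : ℝ) / (t : ℝ) ^ m) * ∑ col : Fin m → Fin t,
          ((∑ e ∈ E, cm e.1 e.2) +
            ∑ e ∈ E, η e.1 e.2 * (if col (cl e.1) = col (cl e.2) then (1 : ℝ) else 0)) := by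
  have : NeZero t := ⟨ht.ne'⟩
  have hexp := average_merged_score (α := Fin t) E (∑ e ∈ E, cm e.1 e.2) η cl
  simp only [Fintype.card_fin] at hexp
  refine ⟨hexp, ?_⟩
  set S := ∑ e ∈ E, η e.1 e.2 * (if cl e.1 = cl e.2 then (1 : ℝ) else 0)
  set S' := ∑ e ∈ E, η e.1 e.2 * (1 - if cl e.1 = cl e.2 then (1 : ℝ) else 0)
  have hagree : ∑ e ∈ E, cm e.1 e.2 + S + S' = ∑ e ∈ E, cp e.1 e.2 := by
    simp only [S, S', ← sum_add_distrib, hη]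
    exact sum_congr rfl fun e _ => by ring
  have hCp : 0 ≤ ∑ e ∈ E, cp e.1 e.2 := sum_nonneg fun e _ => hcp e.1 e.2
  have hgain : 0 ≤ 1 / (t : ℝ) * (∑ e ∈ E, cm e.1 e.2 + S + S') := by
    rw [hagree]; exact mul_nonneg (by positivity) hCp
  rw [hexp]
  linarith

/-- Random merging of clusters: given a clustering cl : V → Fin m with MAX-AGREE
objective OPT = C⁻ + Σ_{ij} η_{ij} χ_{ij}, coloring each cluster independently and
uniformly with one of t colors and merging equal-colored clusters yields expected
objective C⁻ + Σ_{ij} η_{ij} χ_{ij} + (1/t) Σ_{ij} η_{ij} (1 - χ_{ij}),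
which is at least (1 - 1/t)·OPT. -/
theorem random_cluster_merging {V : Type*} [Fintype V]
    (E : Finset (V × V)) (m t : ℕ) (ht : 0 < t)
    (cp cm : V → V → ℝ)
    (hcp : ∀ i j, 0 ≤ cp i j) (hcm : ∀ i j, 0 ≤ cm i j)
    (η : V → V → ℝ) (hη : ∀ i j, η i j = cp i j - cm i j)
    (cl : V → Fin m) :
    ((1 : ℝ) / (t : ℝ) ^ m) * ∑ col : Fin m → Fin t,
        ((∑ e ∈ E, cm e.1 e.2) +
          ∑ e ∈ E, η e.1 e.2 * (if col (cl e.1) = col (cl e.2) then (1 : ℝ) else 0))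
      = (∑ e ∈ E, cm e.1 e.2)
          + (∑ e ∈ E, η e.1 e.2 * (if cl e.1 = cl e.2 then (1 : ℝ) else 0))
          + (1 / (t : ℝ)) *
              ∑ e ∈ E, η e.1 e.2 * (1 - if cl e.1 = cl e.2 then (1 : ℝ) else 0)
    ∧
    (1 - 1 / (t : ℝ)) *
        ((∑ e ∈ E, cm e.1 e.2)
          + ∑ e ∈ E, η e.1 e.2 * (if cl e.1 = cl e.2 then (1 : ℝ) else 0))
      ≤ ((1 : ℝ) / (t : ℝ) ^ m) * ∑ col : Fin m → Fin t,
          ((∑ e ∈ E, cm e.1 e.2) +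
            ∑ e ∈ E, η e.1 e.2 * (if col (cl e.1) = col (cl e.2) then (1 : ℝ) else 0)) :=
  random_cluster_merging_general E m t ht cp cm hcp η hη cl
end

section
/- (Edge sampling preserves all cuts) Let H be a weighted graph on vertex set S' with nonnegative edge weights w_e summing to W. Sample each edge e independently with probability p_e = min(1, 8|S'| w_e / (ε² W)) and give sampled edges weight w_e / p_e. Then for any fixed cut (A,B) of S', the sampled cut weight has expectation equal to the original cut weight w(A,B), and Pr[|w'(A,B) - w(A,B)| ≥ εW] ≤ exp(-2|S'|). Consequently, by a union bound over all 2^{|S'|} cuts, with probability at least 1 - 2^{|S'|} e^{-2|S'|} every cut weight is preserved up to additive εW. -/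
open Finset
open scoped Classical

private lemma sum_prod_bool' {E : Type*} [Fintype E] [DecidableEq E] (f : E → Bool → ℝ) :
    ∑ x : E → Bool, ∏ e, f e (x e) = ∏ e, (f e true + f e false) := by
  have h := Finset.prod_univ_sum (fun _ : E => (Finset.univ : Finset Bool)) f
  rw [Fintype.piFinset_univ] at h
  rw [← h]
  exact Finset.prod_congr rfl fun e _ => Fintype.sum_bool _

private lemma bern_sum' {E : Type*} [Fintype E] [DecidableEq E] (q : E → ℝ) (f : E → Bool → ℝ) :
    ∑ x : E → Bool, ∏ e, ((if x e then q e else 1 - q e) * f e (x e))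
      = ∏ e, (q e * f e true + (1 - q e) * f e false) := by
  have h := sum_prod_bool' (fun e b => (if b then q e else 1 - q e) * f e b)
  simpa using h

private lemma exp_le_quad' {x : ℝ} (hx : |x| ≤ 3/5) : Real.exp x ≤ 1 + x + (19/30) * x^2 := by
  have h1 : |x| ≤ 1 := by linarith [abs_nonneg x]
  have h := Real.exp_bound h1 (n := 3) (by norm_num)
  have h2 : ∑ m ∈ range 3, x ^ m / (m.factorial : ℝ) = 1 + x + x^2/2 := by
    simp [Finset.sum_range_succ]
  rw [h2] at h
  have h3 : |x| ^ 3 * (((3:ℕ).succ : ℝ) / (((3:ℕ).factorial : ℝ) * (3:ℕ))) = (2/9) * |x|^3 := by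
    norm_num [Nat.factorial]; ring
  rw [h3] at h
  have h4 : |x|^3 = |x| * x^2 := by
    rw [pow_succ, sq_abs, pow_two]; ring
  have h5 : (2/9) * |x|^3 ≤ (2/15) * x^2 := by
    rw [h4]; nlinarith [sq_nonneg x, abs_nonneg x]
  have := abs_le.mp h
  linarith

set_option maxHeartbeats 2000000 in
/-- Edge sampling preserves all cuts. Sample each edge e of a weighted graph H on
vertex set V (= S') independently with probability p_e = min(1, 8|S'| w_e /(ε² W)),
giving sampled edges weight w_e/p_e. Then: (i) for every cut A, the sampled cut
weight has expectation equal to the true cut weight; (ii) for every cut A, the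
probability of an additive deviation of at least εW is at most exp(-2|S'|); and
(iii) by a union bound, the probability that some cut deviates by at least εW is
at most 2^{|S'|} exp(-2|S'|). -/
theorem edge_sampling_preserves_cuts {V : Type*} [Fintype V] [DecidableEq V]
    (Ed : Finset (V × V)) (w : V × V → ℝ) (hw : ∀ e ∈ Ed, 0 ≤ w e)
    (W : ℝ) (hWdef : W = ∑ e ∈ Ed, w e) (hW : 0 < W)
    (ε : ℝ) (hε0 : 0 < ε) (hε1 : ε < 1)
    (p : V × V → ℝ)
    (hp : ∀ e, p e = min 1 ((8 : ℝ) * (Fintype.card V : ℝ) * w e / (ε ^ 2 * W)))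
    (Pr : ({e : V × V // e ∈ Ed} → Bool) → ℝ)
    (hPr : ∀ x, Pr x = ∏ e : {e : V × V // e ∈ Ed},
      (if x e then p e.1 else 1 - p e.1))
    (cutW : Finset V → ℝ)
    (hcutW : ∀ A, cutW A = ∑ e ∈ Finset.univ.filter
        (fun e : {e : V × V // e ∈ Ed} => e.1.1 ∈ A ∧ e.1.2 ∉ A), w e.1)
    (cutW' : Finset V → ({e : V × V // e ∈ Ed} → Bool) → ℝ)
    (hcutW' : ∀ A x, cutW' A x = ∑ e ∈ Finset.univ.filter
        (fun e : {e : V × V // e ∈ Ed} => e.1.1 ∈ A ∧ e.1.2 ∉ A),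
        (if x e then w e.1 / p e.1 else 0)) :
    (∀ A : Finset V,
      ∑ x : {e : V × V // e ∈ Ed} → Bool, Pr x * cutW' A x = cutW A)
    ∧ (∀ A : Finset V,
        ∑ x ∈ Finset.univ.filter
            (fun x : {e : V × V // e ∈ Ed} → Bool => ε * W ≤ |cutW' A x - cutW A|),
          Pr x ≤ Real.exp (-2 * (Fintype.card V : ℝ)))
    ∧ (∑ x ∈ Finset.univ.filter
            (fun x : {e : V × V // e ∈ Ed} → Bool =>
              ∃ A : Finset V, ε * W ≤ |cutW' A x - cutW A|),
          Pr x ≤ 2 ^ (Fintype.card V) * Real.exp (-2 * (Fintype.card V : ℝ))) := by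
  have hwE : ∀ e : {e : V × V // e ∈ Ed}, 0 ≤ w e.1 := fun e => hw e.1 e.2
  have hεW : 0 < ε * W := mul_pos hε0 hW
  have hp0 : ∀ e : {e : V × V // e ∈ Ed}, 0 ≤ p e.1 := by
    intro e; rw [hp]
    exact le_min (by norm_num)
      (div_nonneg (mul_nonneg (mul_nonneg (by norm_num) (Nat.cast_nonneg _)) (hwE e))
        (by positivity))
  have hp1 : ∀ e : {e : V × V // e ∈ Ed}, p e.1 ≤ 1 := by
    intro e; rw [hp]; exact min_le_left _ _
  have hpc : ∀ e : {e : V × V // e ∈ Ed}, p e.1 * (w e.1 / p e.1) = w e.1 := by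
    intro e
    rcases eq_or_lt_of_le (hwE e) with h0 | h0
    · rw [← h0]; simp
    · have hnV : (0:ℝ) < (Fintype.card V : ℝ) := by
        have : Nonempty V := ⟨e.1.1⟩
        exact_mod_cast Fintype.card_pos_iff.mpr this
      have hppos : 0 < p e.1 := by
        rw [hp]
        exact lt_min one_pos (div_pos (mul_pos (mul_pos (by norm_num) hnV) h0) (by positivity))
      rw [mul_comm, div_mul_cancel₀ _ (ne_of_gt hppos)]
  have hPrnn : ∀ x, 0 ≤ Pr x := by
    intro x; rw [hPr]
    apply Finset.prod_nonneg
    intro e _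
    split_ifs
    exacts [hp0 e, sub_nonneg.mpr (hp1 e)]
  have hdiff : ∀ (A : Finset V) (x : {e : V × V // e ∈ Ed} → Bool),
      cutW' A x - cutW A = ∑ e ∈ Finset.univ.filter
        (fun e : {e : V × V // e ∈ Ed} => e.1.1 ∈ A ∧ e.1.2 ∉ A),
        ((if x e then w e.1 / p e.1 else 0) - w e.1) := by
    intro A x; rw [hcutW', hcutW, ← Finset.sum_sub_distrib]
  have hsumW : ∀ A : Finset V, ∑ e ∈ Finset.univ.filter
      (fun e : {e : V × V // e ∈ Ed} => e.1.1 ∈ A ∧ e.1.2 ∉ A), w e.1 ≤ W := by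
    intro A
    have h1 : ∑ e : {e : V × V // e ∈ Ed}, w e.1 = W := by
      rw [hWdef]; exact Finset.sum_coe_sort Ed w
    rw [← h1]
    exact Finset.sum_le_sum_of_subset_of_nonneg (Finset.filter_subset _ _)
      (fun e _ _ => hwE e)
  -- Part (i)
  have part1 : ∀ A : Finset V,
      ∑ x : {e : V × V // e ∈ Ed} → Bool, Pr x * cutW' A x = cutW A := by
    have marg : ∀ (e0 : {e : V × V // e ∈ Ed}) (g : Bool → ℝ),
        ∑ x : {e : V × V // e ∈ Ed} → Bool, Pr x * g (x e0)
          = p e0.1 * g true + (1 - p e0.1) * g false := by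
      intro e0 g
      have h1 : ∀ x : {e : V × V // e ∈ Ed} → Bool,
          Pr x * g (x e0) = ∏ e, ((if x e then p e.1 else 1 - p e.1)
            * (if e = e0 then g (x e) else 1)) := by
        intro x
        rw [Finset.prod_mul_distrib, ← hPr]
        congr 1
        rw [Finset.prod_ite_eq' Finset.univ e0 (fun e => g (x e))]
        simp
      rw [Finset.sum_congr rfl (fun x _ => h1 x),
        bern_sum' (fun e : {e : V × V // e ∈ Ed} => p e.1)
          (fun e b => if e = e0 then g b else 1)]
      have h2 : ∀ e : {e : V × V // e ∈ Ed}, e ∈ Finset.univ →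
          (p e.1 * (if e = e0 then g true else 1)
            + (1 - p e.1) * (if e = e0 then g false else 1))
          = if e = e0 then p e0.1 * g true + (1 - p e0.1) * g false else 1 := by
        intro e _
        by_cases h : e = e0
        · subst h; simp
        · simp [h]
      rw [Finset.prod_congr rfl h2, Finset.prod_ite_eq' Finset.univ e0 _]
      simp
    intro A
    simp_rw [hcutW' A, Finset.mul_sum]
    rw [Finset.sum_comm, hcutW]
    apply Finset.sum_congr rfl
    intro e he
    rw [marg e (fun b => if b then w e.1 / p e.1 else 0)]
    simp [hpc e]
  -- Part (ii)
  have key2 : ∀ A : Finset V,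
      ∑ x ∈ Finset.univ.filter
          (fun x : {e : V × V // e ∈ Ed} → Bool => ε * W ≤ |cutW' A x - cutW A|),
        Pr x ≤ Real.exp (-2 * (Fintype.card V : ℝ)) := by
    rcases Nat.eq_zero_or_pos (Fintype.card V) with hn | hn
    · intro A
      haveI : IsEmpty V := Fintype.card_eq_zero_iff.mp hn
      have hzero : ∀ x, cutW' A x - cutW A = 0 := by
        intro x
        rw [hdiff]
        rw [Finset.univ_eq_empty, Finset.filter_empty, Finset.sum_empty]
      have hempty : Finset.univ.filter
          (fun x : {e : V × V // e ∈ Ed} → Bool => ε * W ≤ |cutW' A x - cutW A|) = ∅ := by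
        rw [Finset.filter_eq_empty_iff]
        intro x _
        rw [hzero x]
        simp only [abs_zero, not_le]
        linarith
      rw [hempty, Finset.sum_empty]
      exact (Real.exp_pos _).le
    · have hnR : (1:ℝ) ≤ (Fintype.card V : ℝ) := by exact_mod_cast hn
      have hnR0 : (0:ℝ) < (Fintype.card V : ℝ) := by linarith
      set nR : ℝ := (Fintype.card V : ℝ) with hnRdef
      set M : ℝ := ε^2 * W / (8 * nR) with hMdef
      have hM : 0 < M := by rw [hMdef]; positivity
      set lam : ℝ := (3 * ε / 5) / M with hlamdef
      have hlam : 0 < lam := by rw [hlamdef]; positivity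
      have hlamM : lam * M = 3 * ε / 5 := by
        rw [hlamdef]; field_simp
      have hcMlt : ∀ e : {e : V × V // e ∈ Ed}, p e.1 < 1 → w e.1 / p e.1 ≤ M := by
        intro e hplt
        rcases eq_or_lt_of_le (hwE e) with h0 | h0
        · rw [← h0]; simp [hM.le]
        · have ht : p e.1 = 8 * nR * w e.1 / (ε^2 * W) := by
            rw [hp] at hplt ⊢
            rcases min_lt_iff.mp hplt with h | h
            · exact absurd h (lt_irrefl _)
            · exact min_eq_right h.le
          have hwne : w e.1 ≠ 0 := ne_of_gt h0
          have hεne : ε ≠ 0 := ne_of_gt hε0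
          have hWne : W ≠ 0 := ne_of_gt hW
          have hnRne : nR ≠ 0 := ne_of_gt hnR0
          have heq : w e.1 / p e.1 = M := by
            rw [ht, hMdef]; field_simp
          rw [heq]
      set B : ℝ := (19/30) * lam^2 * M with hBdef
      have hB : 0 ≤ B := by rw [hBdef]; positivity
      have tail : ∀ (s : ℝ), s = 1 ∨ s = -1 → ∀ A : Finset V,
          ∑ x ∈ Finset.univ.filter
              (fun x : {e : V × V // e ∈ Ed} → Bool =>
                ε * W ≤ s * (cutW' A x - cutW A)),
            Pr x ≤ Real.exp (-(372/125) * nR) := by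
        intro s hs A
        have hs2 : s^2 = 1 := by rcases hs with h | h <;> simp [h]
        have hsabs : |s| = 1 := by rcases hs with h | h <;> simp [h]
        -- per-edge factor bound
        have factor_le : ∀ e : {e : V × V // e ∈ Ed},
            p e.1 * Real.exp (lam * s * (w e.1 / p e.1 - w e.1))
              + (1 - p e.1) * Real.exp (lam * s * (0 - w e.1))
            ≤ Real.exp (B * w e.1) := by
          intro e
          by_cases hpe : p e.1 = 1
          · have hone : p e.1 * Real.exp (lam * s * (w e.1 / p e.1 - w e.1))
                + (1 - p e.1) * Real.exp (lam * s * (0 - w e.1)) = 1 := by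
              rw [hpe, div_one, sub_self, mul_zero, Real.exp_zero]; ring
            rw [hone]
            exact Real.one_le_exp (mul_nonneg hB (hwE e))
          · have hplt : p e.1 < 1 := lt_of_le_of_ne (hp1 e) hpe
            have hceM : w e.1 / p e.1 ≤ M := hcMlt e hplt
            have hce0 : 0 ≤ w e.1 / p e.1 := div_nonneg (hwE e) (hp0 e)
            set ce : ℝ := w e.1 / p e.1 with hcedef
            set u : ℝ := lam * s * ce with hudef
            have hu : |u| ≤ 3/5 := by
              rw [hudef]
              have habs : |lam * s * ce| = lam * ce := by
                rw [abs_mul, abs_mul, hsabs, abs_of_nonneg hlam.le, abs_of_nonneg hce0]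
                ring
              rw [habs]
              calc lam * ce ≤ lam * M := mul_le_mul_of_nonneg_left hceM hlam.le
                _ = 3 * ε / 5 := hlamM
                _ ≤ 3/5 := by nlinarith
            have hEq : Real.exp u ≤ 1 + u + (19/30) * u^2 := exp_le_quad' hu
            have hkey : p e.1 * Real.exp (lam * s * (ce - w e.1))
                + (1 - p e.1) * Real.exp (lam * s * (0 - w e.1))
                = Real.exp (lam * s * (0 - w e.1)) * (1 + p e.1 * (Real.exp u - 1)) := by
              rw [show lam * s * (ce - w e.1) = u + lam * s * (0 - w e.1) by
                rw [hudef]; ring, Real.exp_add]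
              ring
            have h2 : 1 + p e.1 * (Real.exp u - 1)
                ≤ Real.exp (p e.1 * (Real.exp u - 1)) := by
              have := Real.add_one_le_exp (p e.1 * (Real.exp u - 1)); linarith
            have hpu : lam * s * w e.1 = p e.1 * u := by
              rw [hudef, hcedef, show p e.1 * (lam * s * (w e.1 / p e.1))
                = lam * s * (p e.1 * (w e.1 / p e.1)) by ring, hpc e]
            have hfin : p e.1 * (Real.exp u - 1) + lam * s * (0 - w e.1) ≤ B * w e.1 := by
              have h3 : p e.1 * (Real.exp u - 1) + lam * s * (0 - w e.1)
                  = p e.1 * (Real.exp u - 1 - u) := by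
                rw [show lam * s * (0 - w e.1) = -(lam * s * w e.1) by ring, hpu]; ring
              rw [h3]
              have h4 : Real.exp u - 1 - u ≤ (19/30) * u^2 := by linarith
              have h5 : p e.1 * (Real.exp u - 1 - u) ≤ p e.1 * ((19/30) * u^2) :=
                mul_le_mul_of_nonneg_left h4 (hp0 e)
              have h6 : p e.1 * ((19/30) * u^2) = (19/30) * lam^2 * s^2 * ce * (p e.1 * ce) := by
                rw [hudef]; ring
              have h7 : p e.1 * ce = w e.1 := by rw [hcedef]; exact hpc e
              have hstep : (19/30) * lam^2 * ce ≤ (19/30) * lam^2 * M :=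
                mul_le_mul_of_nonneg_left hceM (by positivity)
              have h8 : (19/30) * lam^2 * s^2 * ce * (p e.1 * ce) ≤ B * w e.1 := by
                rw [h7, hs2]
                calc (19/30) * lam^2 * 1 * ce * w e.1
                    = ((19/30) * lam^2 * ce) * w e.1 := by ring
                  _ ≤ ((19/30) * lam^2 * M) * w e.1 :=
                    mul_le_mul_of_nonneg_right hstep (hwE e)
                  _ = B * w e.1 := by rw [hBdef]
              rw [h6] at h5
              linarith
            calc p e.1 * Real.exp (lam * s * (ce - w e.1))
                  + (1 - p e.1) * Real.exp (lam * s * (0 - w e.1))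
                = Real.exp (lam * s * (0 - w e.1)) * (1 + p e.1 * (Real.exp u - 1)) := hkey
              _ ≤ Real.exp (lam * s * (0 - w e.1)) * Real.exp (p e.1 * (Real.exp u - 1)) :=
                  mul_le_mul_of_nonneg_left h2 (Real.exp_pos _).le
              _ = Real.exp (p e.1 * (Real.exp u - 1) + lam * s * (0 - w e.1)) := by
                  rw [← Real.exp_add]; ring_nf
              _ ≤ Real.exp (B * w e.1) := Real.exp_le_exp.mpr hfin
        -- MGF evaluation
        have hmgf : ∑ x : {e : V × V // e ∈ Ed} → Bool,
            Pr x * Real.exp (lam * s * (cutW' A x - cutW A))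
            = ∏ e : {e : V × V // e ∈ Ed},
              (if e.1.1 ∈ A ∧ e.1.2 ∉ A then
                 (p e.1 * Real.exp (lam * s * (w e.1 / p e.1 - w e.1))
                   + (1 - p e.1) * Real.exp (lam * s * (0 - w e.1)))
               else 1) := by
          have hterm : ∀ x : {e : V × V // e ∈ Ed} → Bool,
              Pr x * Real.exp (lam * s * (cutW' A x - cutW A))
              = ∏ e : {e : V × V // e ∈ Ed},
                ((if x e then p e.1 else 1 - p e.1) *
                  (if e.1.1 ∈ A ∧ e.1.2 ∉ A then
                     Real.exp (lam * s * ((if x e then w e.1 / p e.1 else 0) - w e.1))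
                   else 1)) := by
            intro x
            rw [Finset.prod_mul_distrib, ← hPr]
            congr 1
            rw [hdiff, Finset.mul_sum, Real.exp_sum, Finset.prod_filter]
          rw [Finset.sum_congr rfl (fun x _ => hterm x),
            bern_sum' (fun e : {e : V × V // e ∈ Ed} => p e.1)
              (fun e b => if e.1.1 ∈ A ∧ e.1.2 ∉ A then
                 Real.exp (lam * s * ((if b then w e.1 / p e.1 else 0) - w e.1)) else 1)]
          apply Finset.prod_congr rfl
          intro e _
          by_cases h : e.1.1 ∈ A ∧ e.1.2 ∉ A
          · simp [h]
          · simp [h]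
        -- product bound
        have hprod_le : (∏ e : {e : V × V // e ∈ Ed},
              (if e.1.1 ∈ A ∧ e.1.2 ∉ A then
                 (p e.1 * Real.exp (lam * s * (w e.1 / p e.1 - w e.1))
                   + (1 - p e.1) * Real.exp (lam * s * (0 - w e.1)))
               else 1)) ≤ Real.exp (B * W) := by
          have h1 : (∏ e : {e : V × V // e ∈ Ed},
              (if e.1.1 ∈ A ∧ e.1.2 ∉ A then
                 (p e.1 * Real.exp (lam * s * (w e.1 / p e.1 - w e.1))
                   + (1 - p e.1) * Real.exp (lam * s * (0 - w e.1)))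
               else 1))
              ≤ ∏ e : {e : V × V // e ∈ Ed},
                (if e.1.1 ∈ A ∧ e.1.2 ∉ A then Real.exp (B * w e.1) else 1) := by
            apply Finset.prod_le_prod
            · intro e _
              split_ifs
              · exact add_nonneg (mul_nonneg (hp0 e) (Real.exp_pos _).le)
                  (mul_nonneg (sub_nonneg.mpr (hp1 e)) (Real.exp_pos _).le)
              · norm_num
            · intro e _
              split_ifs with h
              · exact factor_le e
              · exact le_refl 1
          have h2 : (∏ e : {e : V × V // e ∈ Ed},
              (if e.1.1 ∈ A ∧ e.1.2 ∉ A then Real.exp (B * w e.1) else 1))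
              = Real.exp (∑ e ∈ Finset.univ.filter
                  (fun e : {e : V × V // e ∈ Ed} => e.1.1 ∈ A ∧ e.1.2 ∉ A), B * w e.1) := by
            rw [Real.exp_sum, Finset.prod_filter]
          calc _ ≤ _ := h1
            _ = _ := h2
            _ ≤ Real.exp (B * W) := by
              apply Real.exp_le_exp.mpr
              rw [← Finset.mul_sum]
              exact mul_le_mul_of_nonneg_left (hsumW A) hB
        -- Chernoff step
        have chern : ∑ x ∈ Finset.univ.filter
            (fun x : {e : V × V // e ∈ Ed} → Bool =>
              ε * W ≤ s * (cutW' A x - cutW A)), Pr x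
            ≤ Real.exp (-(lam * (ε * W))) *
              ∑ x : {e : V × V // e ∈ Ed} → Bool,
                Pr x * Real.exp (lam * s * (cutW' A x - cutW A)) := by
          rw [Finset.mul_sum]
          calc ∑ x ∈ Finset.univ.filter (fun x : {e : V × V // e ∈ Ed} → Bool => ε * W ≤ s * (cutW' A x - cutW A)), Pr x
              ≤ ∑ x ∈ Finset.univ.filter (fun x : {e : V × V // e ∈ Ed} → Bool => ε * W ≤ s * (cutW' A x - cutW A)),
                Real.exp (-(lam * (ε * W))) *
                  (Pr x * Real.exp (lam * s * (cutW' A x - cutW A))) := by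
                apply Finset.sum_le_sum
                intro x hx
                simp only [Finset.mem_filter, Finset.mem_univ, true_and] at hx
                have h1 : 1 ≤ Real.exp (lam * (s * (cutW' A x - cutW A) - ε * W)) :=
                  Real.one_le_exp (by nlinarith)
                have h2 : Real.exp (-(lam * (ε * W)))
                    * Real.exp (lam * s * (cutW' A x - cutW A))
                    = Real.exp (lam * (s * (cutW' A x - cutW A) - ε * W)) := by
                  rw [← Real.exp_add]; ring_nf
                calc Pr x = Pr x * 1 := (mul_one _).symm
                  _ ≤ Pr x * Real.exp (lam * (s * (cutW' A x - cutW A) - ε * W)) :=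
                      mul_le_mul_of_nonneg_left h1 (hPrnn x)
                  _ = Real.exp (-(lam * (ε * W)))
                      * (Pr x * Real.exp (lam * s * (cutW' A x - cutW A))) := by
                      rw [← h2]; ring
            _ ≤ ∑ x : {e : V × V // e ∈ Ed} → Bool,
                Real.exp (-(lam * (ε * W))) *
                  (Pr x * Real.exp (lam * s * (cutW' A x - cutW A))) :=
              Finset.sum_le_sum_of_subset_of_nonneg (Finset.filter_subset _ _)
                (fun x _ _ => mul_nonneg (Real.exp_pos _).le
                  (mul_nonneg (hPrnn x) (Real.exp_pos _).le))
        -- arithmetic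
        have harith : -(lam * (ε * W)) + B * W = -(372/125) * nR := by
          rw [hBdef, hlamdef, hMdef]
          have hεne : ε ≠ 0 := ne_of_gt hε0
          have hWne : W ≠ 0 := ne_of_gt hW
          have hnRne : nR ≠ 0 := ne_of_gt hnR0
          field_simp
          ring
        calc ∑ x ∈ Finset.univ.filter (fun x : {e : V × V // e ∈ Ed} → Bool => ε * W ≤ s * (cutW' A x - cutW A)), Pr x
            ≤ Real.exp (-(lam * (ε * W))) *
              ∑ x : {e : V × V // e ∈ Ed} → Bool,
                Pr x * Real.exp (lam * s * (cutW' A x - cutW A)) := chern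
          _ = Real.exp (-(lam * (ε * W))) * ∏ e : {e : V × V // e ∈ Ed},
              (if e.1.1 ∈ A ∧ e.1.2 ∉ A then
                 (p e.1 * Real.exp (lam * s * (w e.1 / p e.1 - w e.1))
                   + (1 - p e.1) * Real.exp (lam * s * (0 - w e.1)))
               else 1) := by rw [hmgf]
          _ ≤ Real.exp (-(lam * (ε * W))) * Real.exp (B * W) :=
              mul_le_mul_of_nonneg_left hprod_le (Real.exp_pos _).le
          _ = Real.exp (-(lam * (ε * W)) + B * W) := (Real.exp_add _ _).symm
          _ = Real.exp (-(372/125) * nR) := by rw [harith]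
      -- combine the two tails
      intro A
      have t1 := tail 1 (Or.inl rfl) A
      have t2 := tail (-1) (Or.inr rfl) A
      have hsub : Finset.univ.filter
          (fun x : {e : V × V // e ∈ Ed} → Bool => ε * W ≤ |cutW' A x - cutW A|) ⊆
          Finset.univ.filter
            (fun x : {e : V × V // e ∈ Ed} → Bool => ε * W ≤ 1 * (cutW' A x - cutW A)) ∪
          Finset.univ.filter
            (fun x : {e : V × V // e ∈ Ed} → Bool => ε * W ≤ (-1) * (cutW' A x - cutW A)) := by
        intro x hx
        simp only [Finset.mem_filter, Finset.mem_univ, true_and, Finset.mem_union] at hx ⊢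
        rcases le_abs.mp hx with h | h
        · exact Or.inl (by linarith)
        · exact Or.inr (by linarith)
      have h1 : ∑ x ∈ Finset.univ.filter
          (fun x : {e : V × V // e ∈ Ed} → Bool => ε * W ≤ |cutW' A x - cutW A|), Pr x
          ≤ ∑ x ∈ (Finset.univ.filter
            (fun x : {e : V × V // e ∈ Ed} → Bool => ε * W ≤ 1 * (cutW' A x - cutW A)) ∪
          Finset.univ.filter
            (fun x : {e : V × V // e ∈ Ed} → Bool => ε * W ≤ (-1) * (cutW' A x - cutW A))),
            Pr x :=
        Finset.sum_le_sum_of_subset_of_nonneg hsub (fun x _ _ => hPrnn x)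
      have h2 := Finset.sum_union_inter
        (s₁ := Finset.univ.filter
          (fun x : {e : V × V // e ∈ Ed} → Bool => ε * W ≤ 1 * (cutW' A x - cutW A)))
        (s₂ := Finset.univ.filter
          (fun x : {e : V × V // e ∈ Ed} → Bool => ε * W ≤ (-1) * (cutW' A x - cutW A)))
        (f := Pr)
      have h3 : 0 ≤ ∑ x ∈ (Finset.univ.filter
          (fun x : {e : V × V // e ∈ Ed} → Bool => ε * W ≤ 1 * (cutW' A x - cutW A)) ∩
          Finset.univ.filter
          (fun x : {e : V × V // e ∈ Ed} → Bool => ε * W ≤ (-1) * (cutW' A x - cutW A))),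
          Pr x := Finset.sum_nonneg fun x _ => hPrnn x
      have h4 : 2 * Real.exp (-(372/125) * nR) ≤ Real.exp (-2 * nR) := by
        have e1 := Real.add_one_le_exp ((61/125) * nR)
        have e2 : Real.exp ((122/125) * nR)
            = Real.exp ((61/125) * nR) * Real.exp ((61/125) * nR) := by
          rw [← Real.exp_add]; ring_nf
        have e3 : (2:ℝ) ≤ Real.exp ((122/125) * nR) := by
          rw [e2]
          nlinarith [Real.exp_pos ((61/125) * nR)]
        have e4 : Real.exp (-2 * nR)
            = Real.exp (-(372/125) * nR) * Real.exp ((122/125) * nR) := by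
          rw [← Real.exp_add]; ring_nf
        rw [e4]
        nlinarith [Real.exp_pos (-(372/125) * nR)]
      linarith
  refine ⟨part1, key2, ?_⟩
  -- Part (iii): union bound
  have hx : ∀ x ∈ Finset.univ.filter
      (fun x : {e : V × V // e ∈ Ed} → Bool =>
        ∃ A : Finset V, ε * W ≤ |cutW' A x - cutW A|),
      Pr x ≤ ∑ A : Finset V, (if ε * W ≤ |cutW' A x - cutW A| then Pr x else 0) := by
    intro x hx
    simp only [Finset.mem_filter, Finset.mem_univ, true_and] at hx
    obtain ⟨A0, hA0⟩ := hx
    have h := Finset.single_le_sum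
      (f := fun A : Finset V => if ε * W ≤ |cutW' A x - cutW A| then Pr x else 0)
      (fun A _ => by
        by_cases hc : ε * W ≤ |cutW' A x - cutW A| <;> simp [hc, hPrnn x]) (Finset.mem_univ A0)
    exact le_trans (le_of_eq (if_pos hA0).symm) h
  calc ∑ x ∈ Finset.univ.filter (fun x : {e : V × V // e ∈ Ed} → Bool => ∃ A : Finset V, ε * W ≤ |cutW' A x - cutW A|), Pr x
      ≤ ∑ x ∈ Finset.univ.filter (fun x : {e : V × V // e ∈ Ed} → Bool => ∃ A : Finset V, ε * W ≤ |cutW' A x - cutW A|),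
        ∑ A : Finset V, (if ε * W ≤ |cutW' A x - cutW A| then Pr x else 0) :=
      Finset.sum_le_sum hx
    _ ≤ ∑ x : {e : V × V // e ∈ Ed} → Bool,
        ∑ A : Finset V, (if ε * W ≤ |cutW' A x - cutW A| then Pr x else 0) :=
      Finset.sum_le_sum_of_subset_of_nonneg (Finset.filter_subset _ _)
        (fun x _ _ => Finset.sum_nonneg fun A _ => by
          split_ifs; exacts [hPrnn x, le_refl 0])
    _ = ∑ A : Finset V, ∑ x : {e : V × V // e ∈ Ed} → Bool,
        (if ε * W ≤ |cutW' A x - cutW A| then Pr x else 0) := Finset.sum_comm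
    _ = ∑ A : Finset V, ∑ x ∈ Finset.univ.filter (fun x : {e : V × V // e ∈ Ed} → Bool => ε * W ≤ |cutW' A x - cutW A|), Pr x := by
      exact Finset.sum_congr rfl fun A _ => (Finset.sum_filter _ _).symm
    _ ≤ ∑ _A : Finset V, Real.exp (-2 * (Fintype.card V : ℝ)) :=
      Finset.sum_le_sum fun A _ => key2 A
    _ = 2 ^ (Fintype.card V) * Real.exp (-2 * (Fintype.card V : ℝ)) := by
      rw [Finset.sum_const, Finset.card_univ, Fintype.card_finset, nsmul_eq_mul]
      norm_num
end
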